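/- For every graph G with at least one vertex and every field F, the orthogonality dimension of G over F satisfies ξ̄_F(G) ≥ Xind(Hom(K_2, G)) + 2. -/

import Mathlib

/-- The underlying set of the free `Z₂`-poset `Q n`: the elements `±1, …, ±(n+1)`,
encoded as nonzero integers of absolute value at most `n + 1`. -/
def QElem (n : ℕ) : Type := {i : ℤ // i ≠ 0 ∧ |i| ≤ n + 1}

/-- The partial order of `Q n`: `p < q` iff `|p| < |q|`. -/
instance (n : ℕ) : PartialOrder (QElem n) where
  le p q := p = q ∨ |p.1| < |q.1|
  le_refl p := Or.inl rfl
  le_trans p q r h1 h2 := by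
    rcases h1 with rfl | h1
    · exact h2
    · rcases h2 with rfl | h2
      · exact Or.inr h1
      · exact Or.inr (h1.trans h2)
  le_antisymm p q h1 h2 := by
    rcases h1 with rfl | h1
    · rfl
    · rcases h2 with rfl | h2
      · rfl
      · exact absurd (h1.trans h2) (lt_irrefl _)

/-- The involution `i ↦ -i` of `Q n`. -/
def QNeg (n : ℕ) : QElem n → QElem n :=
  fun p => ⟨-p.1, neg_ne_zero.mpr p.2.1, by rw [abs_neg]; exact p.2.2⟩

/-- An order-preserving `Z₂`-map between two posets equipped with involutions. -/
def IsZ2Map {P Q : Type*} [PartialOrder P] [PartialOrder Q] (νP : P → P) (νQ : Q → Q)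
    (f : P → Q) : Prop :=
  Monotone f ∧ ∀ p, f (νP p) = νQ (f p)

open Classical in
/-- The cross-index of a free `Z₂`-poset `(P, ν)` : the minimum `n` such that there is an
order-preserving `Z₂`-map from `P` to `Q n`, with the convention `-1` for the empty poset. -/
noncomputable def XindZ (P : Type*) [PartialOrder P] (νP : P → P) : ℤ :=
  if Nonempty P then ((sInf {n : ℕ | ∃ f : P → QElem n, IsZ2Map νP (QNeg n) f} : ℕ) : ℤ)
  else -1

/-- The Hom complex `Hom(K₂, G)`: pairs `(X, Y)` of nonempty disjoint vertex sets such that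
`G[X, Y]` is complete bipartite, ordered by componentwise inclusion. -/
def HomK2 {V : Type*} (G : SimpleGraph V) : Type _ :=
  {XY : Set V × Set V // XY.1.Nonempty ∧ XY.2.Nonempty ∧ Disjoint XY.1 XY.2 ∧
    ∀ a ∈ XY.1, ∀ b ∈ XY.2, G.Adj a b}

instance {V : Type*} (G : SimpleGraph V) : PartialOrder (HomK2 G) :=
  Subtype.partialOrder _

/-- The involution `(X, Y) ↦ (Y, X)` of the Hom complex. -/
def HomK2Swap {V : Type*} (G : SimpleGraph V) : HomK2 G → HomK2 G :=
  fun p => ⟨(p.1.2, p.1.1), p.2.2.1, p.2.1, p.2.2.2.1.symm,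
    fun b hb a ha => (p.2.2.2.2 a ha b hb).symm⟩

/-!
Send `(X, Y) ∈ Hom(K₂, G)` to the pair of subspaces `U = span x(X)`, `W = span x(Y)`. They are
orthogonal, so `dim U + dim W ≤ s`; both are nonzero; and `U ≠ W` because no `x_a` is
self-orthogonal. Hence `±(dim U + dim W - 1)`, the sign recording which of `U`, `W` comes first in
a fixed well-order of subspaces, lies in `Q_{s-2}`. It is an order-preserving `Z₂`-map: enlarging
`(X, Y)` either enlarges the dimension sum or leaves `(U, W)` unchanged, and swapping flips the
sign.
-/

open Module LinearMap

section Sign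

variable {α : Type*}

open Classical in
noncomputable def pairSign (a b : α) : ℤ := if WellOrderingRel a b then 1 else -1

lemma abs_pairSign (a b : α) : |pairSign a b| = 1 := by
  unfold pairSign; split_ifs <;> simp

lemma pairSign_swap {a b : α} (h : a ≠ b) : pairSign b a = -pairSign a b := by
  unfold pairSign
  rcases trichotomous_of WellOrderingRel a b with hab | rfl | hba
  · rw [if_neg (asymm_of WellOrderingRel hab), if_pos hab]
  · exact absurd rfl h
  · rw [if_pos hba, if_neg (asymm_of WellOrderingRel hba), neg_neg]

end Sign

lemma XindZ_le_of_isZ2Map {P : Type*} [PartialOrder P] {ν : P → P} {n : ℕ} {f : P → QElem n}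
    (hf : IsZ2Map ν (QNeg n) f) : XindZ P ν ≤ n := by
  classical
  by_cases hP : Nonempty P
  · rw [XindZ, if_pos hP]
    exact Nat.cast_le.mpr (Nat.sInf_le ⟨f, hf⟩)
  · rw [XindZ, if_neg hP]
    omega

lemma XindZ_of_isEmpty (P : Type*) [PartialOrder P] [IsEmpty P] (ν : P → P) :
    XindZ P ν = -1 := by
  rw [XindZ, if_neg (not_nonempty_iff.mpr ‹_›)]

section SubspacePairs

variable {F E : Type*} [Field F] [AddCommGroup E] [Module F E]

noncomputable def signedRank (A : Submodule F E × Submodule F E) : ℤ :=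
  pairSign A.1 A.2 * (finrank F A.1 + finrank F A.2 - 1)

lemma signedRank_swap {A : Submodule F E × Submodule F E} (h : A.1 ≠ A.2) :
    signedRank A.swap = -signedRank A := by
  simp only [signedRank, Prod.fst_swap, Prod.snd_swap, pairSign_swap h]
  ring

lemma abs_signedRank {A : Submodule F E × Submodule F E}
    (h : 1 ≤ finrank F A.1 + finrank F A.2) :
    |signedRank A| = finrank F A.1 + finrank F A.2 - 1 := by
  rw [signedRank, abs_mul, abs_pairSign, one_mul, abs_of_nonneg (by omega)]

variable [FiniteDimensional F E]

lemma two_le_finrank_add_finrank {U W : Submodule F E} (hU : U ≠ ⊥) (hW : W ≠ ⊥) :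
    2 ≤ finrank F U + finrank F W := by
  have := Submodule.one_le_finrank_iff.mpr hU
  have := Submodule.one_le_finrank_iff.mpr hW
  omega

lemma eq_or_finrank_add_lt_of_le {A C : Submodule F E × Submodule F E} (h : A ≤ C) :
    A = C ∨ finrank F A.1 + finrank F A.2 < finrank F C.1 + finrank F C.2 := by
  have h1 := Submodule.finrank_mono h.1
  have h2 := Submodule.finrank_mono h.2
  by_cases heq : finrank F A.1 + finrank F A.2 = finrank F C.1 + finrank F C.2
  · exact Or.inl (Prod.ext (Submodule.eq_of_le_of_finrank_le h.1 (by omega))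
      (Submodule.eq_of_le_of_finrank_le h.2 (by omega)))
  · exact Or.inr (by omega)

theorem exists_isZ2Map_of_subspacePairs {P : Type*} [PartialOrder P] {ν : P → P} (n : ℕ)
    (g : P → Submodule F E × Submodule F E) (hmono : Monotone g)
    (hswap : ∀ p, g (ν p) = (g p).swap) (hne : ∀ p, (g p).1 ≠ (g p).2)
    (hbot₁ : ∀ p, (g p).1 ≠ ⊥) (hbot₂ : ∀ p, (g p).2 ≠ ⊥)
    (hdim : ∀ p, finrank F (g p).1 + finrank F (g p).2 ≤ n + 2) :
    ∃ f : P → QElem n, IsZ2Map ν (QNeg n) f := by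
  have hrank (p : P) := two_le_finrank_add_finrank (hbot₁ p) (hbot₂ p)
  have habs (p : P) := abs_signedRank (one_le_two.trans (hrank p))
  refine ⟨fun p => ⟨signedRank (g p), fun h0 => ?_, ?_⟩, ?_, fun p => ?_⟩
  · have := habs p; rw [h0, abs_zero] at this; have := hrank p; omega
  · rw [habs p]; have := hdim p; omega
  · intro p q hpq
    rcases eq_or_finrank_add_lt_of_le (hmono hpq) with h | h
    · exact Or.inl (Subtype.ext (congrArg signedRank h))
    · exact Or.inr (by show |_| < |_|; rw [habs p, habs q]; omega)
  · exact Subtype.ext ((congrArg signedRank (hswap p)).trans (signedRank_swap (hne p)))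

end SubspacePairs

section OrthogonalRepresentation

variable {F E : Type*} [Field F] [AddCommGroup E] [Module F E]

lemma LinearMap.BilinForm.span_le_orthogonal_span {B : LinearMap.BilinForm F E} {S T : Set E}
    (h : ∀ u ∈ S, ∀ w ∈ T, B u w = 0) :
    Submodule.span F T ≤ B.orthogonal (Submodule.span F S) := by
  refine Submodule.span_le.mpr fun w hw => BilinForm.mem_orthogonal_iff.mpr fun u hu => ?_
  have hS : Submodule.span F S ≤ ker (B.flip w) :=
    Submodule.span_le.mpr fun u' hu' => h u' hu' w hw
  exact hS hu

lemma LinearMap.BilinForm.finrank_add_finrank_le_of_le_orthogonal [FiniteDimensional F E]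
    {B : LinearMap.BilinForm F E} (hB : B.Nondegenerate) {U W : Submodule F E}
    (h : W ≤ B.orthogonal U) : finrank F U + finrank F W ≤ finrank F E := by
  have hW := Submodule.finrank_mono h
  rw [BilinForm.finrank_orthogonal hB] at hW
  have hU := Submodule.finrank_le U
  omega

lemma nondegenerate_dotProductBilin (ι : Type*) [Fintype ι] :
    (dotProductBilin F F : LinearMap.BilinForm F (ι → F)).Nondegenerate := by
  classical
  exact ⟨fun v hv => funext fun i => by simpa using hv (Pi.single i 1),
    fun w hw => funext fun i => by simpa using hw (Pi.single i 1)⟩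

variable {V : Type*} {G : SimpleGraph V}

lemma span_image_ne_bot {x : V → E} (hx : ∀ v, x v ≠ 0) {X : Set V} (hX : X.Nonempty) :
    Submodule.span F (x '' X) ≠ ⊥ := by
  obtain ⟨a, ha⟩ := hX
  exact fun h => hx a (Submodule.span_eq_bot.mp h _ ⟨a, ha, rfl⟩)

variable (F) in
def HomK2.spanPair (x : V → E) (p : HomK2 G) :
    Submodule F E × Submodule F E :=
  (Submodule.span F (x '' p.1.1), Submodule.span F (x '' p.1.2))

namespace HomK2

lemma spanPair_swap (x : V → E) (p : HomK2 G) :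
    spanPair F x (HomK2Swap G p) = (spanPair F x p).swap := rfl

lemma spanPair_mono (x : V → E) : Monotone (spanPair F x (G := G)) := fun _ _ hpq =>
  ⟨Submodule.span_mono (Set.image_mono hpq.1), Submodule.span_mono (Set.image_mono hpq.2)⟩

variable {B : LinearMap.BilinForm F E} {x : V → E}
  (horth : ∀ u v, G.Adj u v → B (x u) (x v) = 0)
include horth

lemma spanPair_snd_le_orthogonal_fst (p : HomK2 G) :
    (spanPair F x p).2 ≤ B.orthogonal (spanPair F x p).1 := by
  refine LinearMap.BilinForm.span_le_orthogonal_span ?_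
  rintro _ ⟨a, ha, rfl⟩ _ ⟨b, hb, rfl⟩
  exact horth a b (p.2.2.2.2 a ha b hb)

lemma spanPair_fst_ne_snd (hself : ∀ v, B (x v) (x v) ≠ 0) (p : HomK2 G) :
    (spanPair F x p).1 ≠ (spanPair F x p).2 := by
  intro h
  obtain ⟨a, ha⟩ := p.2.1
  have hxa : x a ∈ (spanPair F x p).1 := Submodule.subset_span ⟨a, ha, rfl⟩
  exact hself a (BilinForm.mem_orthogonal_iff.mp
    (spanPair_snd_le_orthogonal_fst horth p (h ▸ hxa)) (x a) hxa)

end HomK2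

end OrthogonalRepresentation

open HomK2 in
theorem XindZ_homK2_add_two_le_finrank {F E V : Type*} [Field F] [AddCommGroup E] [Module F E]
    [FiniteDimensional F E] [Nonempty V] {G : SimpleGraph V} {B : LinearMap.BilinForm F E}
    (hB : B.Nondegenerate) {x : V → E} (hself : ∀ v, B (x v) (x v) ≠ 0)
    (horth : ∀ u v, G.Adj u v → B (x u) (x v) = 0) :
    XindZ (HomK2 G) (HomK2Swap G) + 2 ≤ finrank F E := by
  have hx (v : V) : x v ≠ 0 := fun h => hself v (by simp [h])
  have hbot₁ (q : HomK2 G) : (spanPair F x q).1 ≠ ⊥ := span_image_ne_bot hx q.2.1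
  have hbot₂ (q : HomK2 G) : (spanPair F x q).2 ≠ ⊥ := span_image_ne_bot hx q.2.2.1
  rcases isEmpty_or_nonempty (HomK2 G) with _ | ⟨⟨p⟩⟩
  · obtain ⟨v⟩ := ‹Nonempty V›
    have := finrank_pos_iff_exists_ne_zero (R := F).mpr ⟨x v, hx v⟩
    rw [XindZ_of_isEmpty]
    omega
  · have hdim (q : HomK2 G) := BilinForm.finrank_add_finrank_le_of_le_orthogonal hB
      (spanPair_snd_le_orthogonal_fst horth q)
    have h2 : 2 ≤ finrank F E :=
      (two_le_finrank_add_finrank (hbot₁ p) (hbot₂ p)).trans (hdim p)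
    obtain ⟨f, hf⟩ := exists_isZ2Map_of_subspacePairs (finrank F E - 2) (spanPair F x)
      (spanPair_mono x) (spanPair_swap x) (spanPair_fst_ne_snd horth hself)
      hbot₁ hbot₂ (fun q => by have := hdim q; omega)
    have := XindZ_le_of_isZ2Map hf
    omega

theorem orthdim_ge_Xind_add_two_general {V : Type*} [Nonempty V] (G : SimpleGraph V)
    (F : Type*) [Field F] (s : ℕ) (x : V → (Fin s → F))
    (hself : ∀ v, ∑ i, x v i * x v i ≠ 0)
    (horth : ∀ u v, G.Adj u v → ∑ i, x u i * x v i = 0) :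
    XindZ (HomK2 G) (HomK2Swap G) + 2 ≤ (s : ℤ) := by
  simpa using XindZ_homK2_add_two_le_finrank (nondegenerate_dotProductBilin (F := F) (Fin s))
    (x := x) hself horth

/-- For every graph `G` with at least one vertex and every field `F`, the
orthogonality dimension of `G` over `F` is at least `Xind(Hom(K₂, G)) + 2`: every
`s`-dimensional orthogonal representation of `G` over `F` satisfies
`s ≥ Xind(Hom(K₂, G)) + 2`. -/
theorem orthdim_ge_Xind_add_two {V : Type*} [Fintype V] [Nonempty V] (G : SimpleGraph V)
    (F : Type*) [Field F] (s : ℕ) (x : V → (Fin s → F))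
    (hself : ∀ v, ∑ i, x v i * x v i ≠ 0)
    (horth : ∀ u v, G.Adj u v → ∑ i, x u i * x v i = 0) :
    XindZ (HomK2 G) (HomK2Swap G) + 2 ≤ (s : ℤ) :=
  orthdim_ge_Xind_add_two_general G F s x hself horth
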